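/- arXiv:1801.07815 — 5 statements merged into one kernel-verified Lean document; each statement's English description precedes it below -/
import Mathlib

section
/- Let g : ℝ^d → ℝ^d be continuously differentiable and suppose there exist θ0 > 0 and θ1, θ2 ≥ 0 such that ⟨u, ∇_u g(x)⟩ ≤ −θ0(1 + θ1|x|^{θ2})|u|² for all u, x ∈ ℝ^d. Then for every x ∈ ℝ^d, ⟨x, g(x) − g(0)⟩ ≤ −θ0(|x|² + θ1|x|^{2+θ2}/(1+θ2)). -/
/-!
Along the ray `t ↦ t • x`, the derivative of `t ↦ ⟪x, g (t • x)⟫` is `⟪x, ∇_x g(t x)⟫`, which the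
dissipativity hypothesis bounds by `-θ0 (1 + θ1 t^θ2 |x|^θ2) |x|²`. Integrating over `t ∈ [0, 1]`
gives the claim, the factor `1 / (1 + θ2)` being `∫₀¹ t^θ2 dt`.
-/

open scoped RealInnerProductSpace

open Set intervalIntegral

section RaySegment

variable {E : Type*} [NormedAddCommGroup E] [InnerProductSpace ℝ E] {g : E → E}

theorem hasDerivAt_inner_comp_smul (v x : E) {t : ℝ} (hg : DifferentiableAt ℝ g (t • x)) :
    HasDerivAt (fun s : ℝ => ⟪v, g (s • x)⟫) ⟪v, fderiv ℝ g (t • x) x⟫ t := by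
  have hray : HasDerivAt (fun s : ℝ => s • x) x t := by
    simpa using (hasDerivAt_id t).smul_const x
  exact (innerSL ℝ v).hasFDerivAt.comp_hasDerivAt t (hg.hasFDerivAt.comp_hasDerivAt t hray)

theorem inner_sub_le_integral_of_inner_fderiv_le (hg : Differentiable ℝ g) (x : E) {φ : ℝ → ℝ}
    (hφ : IntervalIntegrable φ MeasureTheory.volume 0 1)
    (hle : ∀ t ∈ Ioo (0 : ℝ) 1, ⟪x, fderiv ℝ g (t • x) x⟫ ≤ φ t) :
    ⟪x, g x - g 0⟫ ≤ ∫ t in (0 : ℝ)..1, φ t := by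
  have hderiv (t : ℝ) := hasDerivAt_inner_comp_smul x x (hg (t • x))
  have key := sub_le_integral_of_hasDeriv_right_of_le zero_le_one
    (fun t _ => (hderiv t).continuousAt.continuousWithinAt)
    (fun t _ => (hderiv t).hasDerivWithinAt)
    ((intervalIntegrable_iff_integrableOn_Icc_of_le zero_le_one).1 hφ) hle
  simpa [inner_sub_right] using key

end RaySegment

theorem integral_const_add_mul_rpow {p : ℝ} (hp : -1 < p) (a b : ℝ) :
    ∫ t in (0 : ℝ)..1, (a + b * t ^ p) = a + b / (1 + p) := by
  have hpow : IntervalIntegrable (fun t : ℝ => t ^ p) MeasureTheory.volume 0 1 :=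
    intervalIntegrable_rpow' hp
  rw [integral_add intervalIntegrable_const (hpow.const_mul b), integral_const,
    integral_const_mul, integral_rpow (Or.inl hp), Real.one_rpow,
    Real.zero_rpow (by linarith)]
  simp only [smul_eq_mul]
  ring_nf

theorem stmt0_general (d : ℕ)
    (g : EuclideanSpace ℝ (Fin d) → EuclideanSpace ℝ (Fin d))
    (hg : ContDiff ℝ 1 g)
    (θ0 θ1 θ2 : ℝ) (hθ2 : 0 ≤ θ2)
    (hdrift : ∀ u x : EuclideanSpace ℝ (Fin d),
      ⟪u, fderiv ℝ g x u⟫ ≤ -θ0 * (1 + θ1 * ‖x‖ ^ θ2) * ‖u‖ ^ 2) :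
    ∀ x : EuclideanSpace ℝ (Fin d),
      ⟪x, g x - g 0⟫ ≤ -θ0 * (‖x‖ ^ 2 + θ1 * ‖x‖ ^ (2 + θ2) / (1 + θ2)) := by
  intro x
  set a := -θ0 * ‖x‖ ^ 2
  set b := -θ0 * θ1 * ‖x‖ ^ θ2 * ‖x‖ ^ 2
  have hbound : ∀ t ∈ Ioo (0 : ℝ) 1, ⟪x, fderiv ℝ g (t • x) x⟫ ≤ a + b * t ^ θ2 := by
    intro t ht
    have hnorm : ‖t • x‖ ^ θ2 = t ^ θ2 * ‖x‖ ^ θ2 := by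
      rw [norm_smul, Real.norm_of_nonneg ht.1.le, Real.mul_rpow ht.1.le (norm_nonneg x)]
    calc ⟪x, fderiv ℝ g (t • x) x⟫ ≤ -θ0 * (1 + θ1 * ‖t • x‖ ^ θ2) * ‖x‖ ^ 2 := hdrift x (t • x)
      _ = a + b * t ^ θ2 := by rw [hnorm]; ring
  have hcomparison : IntervalIntegrable (fun t : ℝ => a + b * t ^ θ2) MeasureTheory.volume 0 1 :=
    intervalIntegrable_const.add
      ((intervalIntegrable_rpow' (by linarith)).const_mul b)
  have hsplit : ‖x‖ ^ (2 + θ2) = ‖x‖ ^ 2 * ‖x‖ ^ θ2 := by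
    rw [Real.rpow_add' (norm_nonneg x) (by linarith), Real.rpow_two]
  calc ⟪x, g x - g 0⟫
      ≤ ∫ t in (0 : ℝ)..1, (a + b * t ^ θ2) :=
        inner_sub_le_integral_of_inner_fderiv_le (hg.differentiable one_ne_zero) x
          hcomparison hbound
    _ = -θ0 * (‖x‖ ^ 2 + θ1 * ‖x‖ ^ (2 + θ2) / (1 + θ2)) := by
        rw [integral_const_add_mul_rpow (by linarith) a b, hsplit]; ring

theorem stmt0 (d : ℕ) (hd : 1 ≤ d)
    (g : EuclideanSpace ℝ (Fin d) → EuclideanSpace ℝ (Fin d))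
    (hg : ContDiff ℝ 1 g)
    (θ0 θ1 θ2 : ℝ) (hθ0 : 0 < θ0) (hθ1 : 0 ≤ θ1) (hθ2 : 0 ≤ θ2)
    (hdrift : ∀ u x : EuclideanSpace ℝ (Fin d),
      ⟪u, fderiv ℝ g x u⟫ ≤ -θ0 * (1 + θ1 * ‖x‖ ^ θ2) * ‖u‖ ^ 2) :
    ∀ x : EuclideanSpace ℝ (Fin d),
      ⟪x, g x - g 0⟫ ≤ -θ0 * (‖x‖ ^ 2 + θ1 * ‖x‖ ^ (2 + θ2) / (1 + θ2)) :=
  stmt0_general d g hg θ0 θ1 θ2 hθ2 hdrift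
end

section
/- Let g : ℝ^d → ℝ^d be twice continuously differentiable satisfying, for some θ0 > 0 and θ1, θ2, θ3 ≥ 0: (a2) ⟨u, ∇_u g(x)⟩ ≤ −θ0(1+θ1|x|^{θ2})|u|² for all u, x, and (a3) |∇_{u1}∇_{u2} g(x)| ≤ θ3(1+θ1|x|)^{θ2−1}|u1||u2| for all u1, u2, x. Let X : [0,∞) → ℝ^d be continuous, let u1, u2 ∈ ℝ^d, let v_i : [0,∞) → ℝ^d (i = 1,2) be differentiable with v_i′(t) = ∇g(X(t)) v_i(t) and v_i(0) = u_i, and let ζ : [0,∞) → ℝ^d be differentiable with ζ(0) = 0 and ζ′(t) = ∇g(X(t)) ζ(t) + ∇²g(X(t))[v_2(t), v_1(t)] for all t ≥ 0. Then there exists a constant C, depending only on θ0, θ1, θ2, θ3 (and not on X, u1, u2, t), such that |ζ(t)| ≤ C|u1||u2| for all t ≥ 0. -/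
open scoped RealInnerProductSpace

set_option maxHeartbeats 1000000
open scoped RealInnerProductSpace

lemma mono_aux {f f' : ℝ → ℝ} (hc : ContinuousOn f (Set.Ici 0))
    (hd : ∀ s, 0 < s → HasDerivAt f (f' s) s)
    (h0 : ∀ s, 0 < s → f' s ≤ 0) : ∀ t, 0 ≤ t → f t ≤ f 0 := by
  intro t ht
  have := antitoneOn_of_deriv_nonpos (convex_Ici 0) hc ?_ ?_
  · exact this Set.self_mem_Ici ht ht
  · rw [interior_Ici]
    exact fun s hs => ((hd s hs).differentiableAt).differentiableWithinAt
  · rw [interior_Ici]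
    intro s hs
    rw [(hd s hs).deriv]
    exact h0 s hs

lemma pow_bound (θ1 θ2 : ℝ) (h1 : 0 ≤ θ1) (h2 : 0 ≤ θ2) :
    ∃ c : ℝ, 0 ≤ c ∧ ∀ s : ℝ, 0 ≤ s →
      (1 + θ1 * s) ^ (θ2 - 1) ≤ c * (1 + θ1 * s ^ θ2) := by
  have base : ∀ s : ℝ, 0 ≤ s → (1:ℝ) ≤ 1 + θ1 * s ^ θ2 := by
    intro s hs
    nlinarith [Real.rpow_nonneg hs θ2, mul_nonneg h1 (Real.rpow_nonneg hs θ2)]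
  rcases le_or_gt θ2 1 with h | h
  · refine ⟨1, zero_le_one, fun s hs => ?_⟩
    rw [one_mul]
    calc (1 + θ1 * s) ^ (θ2 - 1) ≤ 1 :=
          Real.rpow_le_one_of_one_le_of_nonpos (by nlinarith) (by linarith)
      _ ≤ 1 + θ1 * s ^ θ2 := base s hs
  · set p := θ2 - 1 with hp
    have hp0 : 0 < p := by simp [hp]; linarith
    set m := max 1 θ1⁻¹ with hm
    have hm1 : (1:ℝ) ≤ m := le_max_left _ _
    refine ⟨2 ^ p * (1 + θ1 ^ p * m), by positivity, fun s hs => ?_⟩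
    have h1s : (0:ℝ) ≤ 1 + θ1 * s := by nlinarith
    have step1 : (1 + θ1 * s) ^ p ≤ 2 ^ p * (1 + (θ1 * s) ^ p) := by
      have : (1 + θ1 * s) ≤ 2 * max 1 (θ1 * s) := by
        rcases le_total (θ1 * s) 1 with h' | h'
        · calc 1 + θ1 * s ≤ 1 + 1 := by linarith
            _ ≤ 2 * max 1 (θ1 * s) := by simp [max_eq_left h']; norm_num
        · calc 1 + θ1 * s ≤ θ1 * s + θ1 * s := by linarith
            _ = 2 * max 1 (θ1 * s) := by rw [max_eq_right h']; ring
      calc (1 + θ1 * s) ^ p ≤ (2 * max 1 (θ1 * s)) ^ p :=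
            Real.rpow_le_rpow h1s this hp0.le
        _ = 2 ^ p * (max 1 (θ1 * s)) ^ p := Real.mul_rpow (by norm_num) (le_max_of_le_left zero_le_one)
        _ ≤ 2 ^ p * (1 + (θ1 * s) ^ p) := by
            gcongr 2 ^ p * ?_
            rcases le_total (θ1 * s) 1 with h' | h'
            · rw [max_eq_left h']
              have : (0:ℝ) ≤ (θ1 * s) ^ p := Real.rpow_nonneg (mul_nonneg h1 hs) p
              simp [Real.one_rpow]; linarith
            · rw [max_eq_right h']
              have : (0:ℝ) ≤ (θ1 * s) ^ p := Real.rpow_nonneg (mul_nonneg h1 hs) p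
              linarith
    have step2 : (θ1 * s) ^ p ≤ θ1 ^ p * (1 + s ^ θ2) := by
      rw [Real.mul_rpow h1 hs]
      have key : s ^ p ≤ 1 + s ^ θ2 := ?_
      · exact mul_le_mul_of_nonneg_left key (Real.rpow_nonneg h1 p)
      rcases le_total s 1 with h' | h'
      · have : s ^ p ≤ 1 := Real.rpow_le_one hs h' hp0.le
        have : (0:ℝ) ≤ s ^ θ2 := Real.rpow_nonneg hs θ2
        linarith [Real.rpow_le_one hs h' hp0.le]
      · have : s ^ p ≤ s ^ θ2 := Real.rpow_le_rpow_of_exponent_le h' (by linarith)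
        have : (0:ℝ) ≤ s ^ p := Real.rpow_nonneg hs p
        linarith [Real.rpow_le_rpow_of_exponent_le h' (show p ≤ θ2 by simp only [hp]; linarith)]
    have step3 : θ1 ^ p * (1 + s ^ θ2) ≤ θ1 ^ p * m * (1 + θ1 * s ^ θ2) := by
      rcases eq_or_lt_of_le h1 with h1' | h1'
      · rw [← h1', Real.zero_rpow hp0.ne']
        simp
      · have hminv : θ1⁻¹ ≤ m := le_max_right _ _
        have hmul : 1 ≤ m * θ1 := by
          calc (1:ℝ) = θ1⁻¹ * θ1 := by field_simp
            _ ≤ m * θ1 := by gcongr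
        have key : 1 + s ^ θ2 ≤ m * (1 + θ1 * s ^ θ2) := by
          have hs2 : (0:ℝ) ≤ s ^ θ2 := Real.rpow_nonneg hs θ2
          calc 1 + s ^ θ2 ≤ m + (m * θ1) * s ^ θ2 := by nlinarith
            _ = m * (1 + θ1 * s ^ θ2) := by ring
        calc θ1 ^ p * (1 + s ^ θ2) ≤ θ1 ^ p * (m * (1 + θ1 * s ^ θ2)) :=
              mul_le_mul_of_nonneg_left key (Real.rpow_nonneg h1 p)
          _ = θ1 ^ p * m * (1 + θ1 * s ^ θ2) := by ring
    have hb := base s hs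
    have hθ1p : (0:ℝ) ≤ θ1 ^ p := Real.rpow_nonneg h1 p
    have h2p : (0:ℝ) ≤ (2:ℝ) ^ p := Real.rpow_nonneg (by norm_num) p
    calc (1 + θ1 * s) ^ p ≤ 2 ^ p * (1 + (θ1 * s) ^ p) := step1
      _ ≤ 2 ^ p * (1 + θ1 ^ p * m * (1 + θ1 * s ^ θ2)) := by
          have := step2.trans step3
          nlinarith
      _ ≤ 2 ^ p * ((1 + θ1 ^ p * m) * (1 + θ1 * s ^ θ2)) := by
          gcongr 2 ^ p * ?_
          nlinarith [mul_nonneg hθ1p (by linarith : (0:ℝ) ≤ m)]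
      _ = 2 ^ p * (1 + θ1 ^ p * m) * (1 + θ1 * s ^ θ2) := by ring

theorem stmt10 (θ0 θ1 θ2 θ3 : ℝ)
    (hθ0 : 0 < θ0) (hθ1 : 0 ≤ θ1) (hθ2 : 0 ≤ θ2) (hθ3 : 0 ≤ θ3) :
    ∃ C : ℝ,
      ∀ (d : ℕ), 1 ≤ d →
      ∀ g : EuclideanSpace ℝ (Fin d) → EuclideanSpace ℝ (Fin d), ContDiff ℝ 2 g →
      (∀ u x : EuclideanSpace ℝ (Fin d),
        ⟪u, fderiv ℝ g x u⟫ ≤ -θ0 * (1 + θ1 * ‖x‖ ^ θ2) * ‖u‖ ^ 2) →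
      (∀ u1 u2 x : EuclideanSpace ℝ (Fin d),
        ‖fderiv ℝ (fderiv ℝ g) x u1 u2‖
          ≤ θ3 * (1 + θ1 * ‖x‖) ^ (θ2 - 1) * ‖u1‖ * ‖u2‖) →
      ∀ X : ℝ → EuclideanSpace ℝ (Fin d), ContinuousOn X (Set.Ici 0) →
      ∀ (u1 u2 : EuclideanSpace ℝ (Fin d))
        (v1 v2 ζ : ℝ → EuclideanSpace ℝ (Fin d)),
        v1 0 = u1 → v2 0 = u2 →
        (∀ t, 0 ≤ t → HasDerivAt v1 (fderiv ℝ g (X t) (v1 t)) t) →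
        (∀ t, 0 ≤ t → HasDerivAt v2 (fderiv ℝ g (X t) (v2 t)) t) →
        ζ 0 = 0 →
        (∀ t, 0 ≤ t → HasDerivAt ζ
          (fderiv ℝ g (X t) (ζ t)
            + fderiv ℝ (fderiv ℝ g) (X t) (v2 t) (v1 t)) t) →
        ∀ t, 0 ≤ t → ‖ζ t‖ ≤ C * ‖u1‖ * ‖u2‖ := by
  obtain ⟨c, hc0, hc⟩ : ∃ c : ℝ, 0 ≤ c ∧ ∀ s : ℝ, 0 ≤ s →
      (1 + θ1 * s) ^ (θ2 - 1) ≤ c * (1 + θ1 * s ^ θ2) := pow_bound θ1 θ2 hθ1 hθ2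
  set a : ℝ := θ3 * c / θ0 with ha
  have ha0 : 0 ≤ a := by positivity
  refine ⟨a / 2, ?_⟩
  intro d hd g hg ha2 ha3 X hX u1 u2 v1 v2 ζ hv10 hv20 hv1 hv2 hζ0 hζ' t ht
  set K : ℝ := ‖u1‖ * ‖u2‖ with hK
  have hK0 : 0 ≤ K := by positivity
  -- extended path and coefficient
  set Y : ℝ → EuclideanSpace ℝ (Fin d) := fun s => X (max s 0) with hY
  have hYcont : Continuous Y := by
    simpa [hY, Function.comp_def] using
      hX.comp_continuous (continuous_id.max continuous_const) (fun s => le_max_right s 0)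
  have hYX : ∀ s : ℝ, 0 ≤ s → Y s = X s := fun s hs => by simp [hY, max_eq_left hs]
  set ψ : ℝ → ℝ := fun s => θ0 * (1 + θ1 * ‖Y s‖ ^ θ2) with hψ
  have hψs : ∀ r, ψ r = θ0 * (1 + θ1 * ‖Y r‖ ^ θ2) := fun r => rfl
  have hψcont : Continuous ψ := by
    apply continuous_const.mul
    apply continuous_const.add
    apply continuous_const.mul
    exact (hYcont.norm).rpow_const (fun s => Or.inr hθ2)
  have hψpos : ∀ s, 0 < ψ s := by
    intro s
    have h1 : (0:ℝ) ≤ ‖Y s‖ ^ θ2 := Real.rpow_nonneg (norm_nonneg _) θ2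
    have h2 := mul_nonneg hθ1 h1
    rw [hψs]
    nlinarith
  set Ψ : ℝ → ℝ := fun r => ∫ s in (0:ℝ)..r, ψ s with hΨdef
  have hΨ : ∀ r : ℝ, HasDerivAt Ψ (ψ r) r := fun r =>
    intervalIntegral.integral_hasDerivAt_right (hψcont.intervalIntegrable _ _)
      (hψcont.stronglyMeasurableAtFilter _ _) hψcont.continuousAt
  have hΨ0 : Ψ 0 = 0 := intervalIntegral.integral_same
  -- inner product bound from (a2), rewritten via ψ
  have key2 : ∀ (w : EuclideanSpace ℝ (Fin d)) (s : ℝ), 0 ≤ s →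
      ⟪w, fderiv ℝ g (X s) w⟫ ≤ -(ψ s * ‖w‖ ^ 2) := by
    intro w s hs
    have h := ha2 w (X s)
    rw [hψs, hYX s hs]
    nlinarith [h]
  -- decay of linearized flows
  have decay : ∀ (v : ℝ → EuclideanSpace ℝ (Fin d)) (u : EuclideanSpace ℝ (Fin d)), v 0 = u →
      (∀ s, 0 ≤ s → HasDerivAt v (fderiv ℝ g (X s) (v s)) s) →
      ∀ s, 0 ≤ s → ‖v s‖ ≤ Real.exp (-Ψ s) * ‖u‖ := by
    intro v u hv0 hv s hs
    set f : ℝ → ℝ := fun s => Real.exp (2 * Ψ s) * ⟪v s, v s⟫ with hf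
    have hfr : ∀ r, f r = Real.exp (2 * Ψ r) * ⟪v r, v r⟫ := fun r => rfl
    have hder : ∀ r, 0 ≤ r → HasDerivAt f
        (Real.exp (2 * Ψ r) * (2 * ψ r) * ⟪v r, v r⟫
          + Real.exp (2 * Ψ r) * (⟪v r, fderiv ℝ g (X r) (v r)⟫ + ⟪fderiv ℝ g (X r) (v r), v r⟫)) r := by
      intro r hr
      exact (((hΨ r).const_mul 2).exp).mul (HasDerivAt.inner ℝ (hv r hr) (hv r hr))
    have hcont : ContinuousOn f (Set.Ici 0) := by
      apply ContinuousOn.mul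
      · have hΨc : Continuous Ψ := continuous_iff_continuousAt.mpr fun r => (hΨ r).continuousAt
        exact (Real.continuous_exp.comp (continuous_const.mul hΨc)).continuousOn
      · have hvc : ContinuousOn v (Set.Ici 0) := fun r hr => ((hv r hr).continuousAt).continuousWithinAt
        exact hvc.inner hvc
    have hle : ∀ r, 0 < r → (Real.exp (2 * Ψ r) * (2 * ψ r) * ⟪v r, v r⟫
          + Real.exp (2 * Ψ r) * (⟪v r, fderiv ℝ g (X r) (v r)⟫ + ⟪fderiv ℝ g (X r) (v r), v r⟫)) ≤ 0 := by
      intro r hr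
      have h1 : ⟪v r, fderiv ℝ g (X r) (v r)⟫ ≤ -(ψ r * ‖v r‖ ^ 2) := key2 (v r) r hr.le
      have h2 : ⟪fderiv ℝ g (X r) (v r), v r⟫ = ⟪v r, fderiv ℝ g (X r) (v r)⟫ := real_inner_comm _ _
      have h3 : ⟪v r, v r⟫ = ‖v r‖ ^ 2 := real_inner_self_eq_norm_sq _
      have h4 : (0:ℝ) < Real.exp (2 * Ψ r) := Real.exp_pos _
      rw [h2, h3]
      nlinarith [hψpos r]
    have := mono_aux hcont (fun r hr => hder r hr.le) hle s hs
    have hf0 : f 0 = ‖u‖ ^ 2 := by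
      rw [hfr, hΨ0, hv0, real_inner_self_eq_norm_sq]
      simp
    rw [hf0, hfr] at this
    -- this : exp(2Ψ s) * ⟪v s, v s⟫ ≤ ‖u‖^2
    have hsq : ‖v s‖ ^ 2 ≤ (Real.exp (-Ψ s) * ‖u‖) ^ 2 := by
      rw [real_inner_self_eq_norm_sq] at this
      have he : (Real.exp (-Ψ s) * ‖u‖) ^ 2 = Real.exp (-(2 * Ψ s)) * ‖u‖ ^ 2 := by
        rw [mul_pow, ← Real.exp_nat_mul]
        ring_nf
      rw [he, Real.exp_neg]
      have h4 : (0:ℝ) < Real.exp (2 * Ψ s) := Real.exp_pos _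
      rw [inv_mul_eq_div, le_div_iff₀ h4, mul_comm]
      exact this
    exact (pow_le_pow_iff_left₀ (norm_nonneg _) (by positivity) two_ne_zero).mp hsq
  -- decay bounds for v1 v2
  have hv1d := decay v1 u1 hv10 hv1
  have hv2d := decay v2 u2 hv20 hv2
  -- bound on the source term
  have hsrc : ∀ s, 0 ≤ s → ‖fderiv ℝ (fderiv ℝ g) (X s) (v2 s) (v1 s)‖
      ≤ a * ψ s * Real.exp ((-2) * Ψ s) * K := by
    intro s hs
    have h3 := ha3 (v2 s) (v1 s) (X s)
    have hcs := hc ‖X s‖ (norm_nonneg _)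
    have hψX : ψ s = θ0 * (1 + θ1 * ‖X s‖ ^ θ2) := by rw [hψs, hYX s hs]
    have hrp : (0:ℝ) ≤ (1 + θ1 * ‖X s‖) ^ (θ2 - 1) :=
      Real.rpow_nonneg (by positivity) _
    have he2 : Real.exp (-Ψ s) * Real.exp (-Ψ s) = Real.exp ((-2) * Ψ s) := by
      rw [← Real.exp_add]; ring_nf
    calc ‖fderiv ℝ (fderiv ℝ g) (X s) (v2 s) (v1 s)‖
        ≤ θ3 * (1 + θ1 * ‖X s‖) ^ (θ2 - 1) * ‖v2 s‖ * ‖v1 s‖ := h3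
      _ ≤ θ3 * (c * (1 + θ1 * ‖X s‖ ^ θ2)) * (Real.exp (-Ψ s) * ‖u2‖)
            * (Real.exp (-Ψ s) * ‖u1‖) := by
          gcongr <;>
            first
              | positivity
              | exact hcs
              | exact hv2d s hs
              | exact hv1d s hs
              | exact norm_nonneg _
      _ = a * ψ s * (Real.exp (-Ψ s) * Real.exp (-Ψ s)) * K := by
          rw [hψX, ha, hK]; field_simp
      _ = a * ψ s * Real.exp ((-2) * Ψ s) * K := by rw [he2]
  -- the epsilon Lyapunov function
  have main : ∀ ε : ℝ, 0 < ε → ‖ζ t‖ ≤ a / 2 * K + ε := by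
    intro ε hε
    set f : ℝ → ℝ := fun s => Real.sqrt (⟪ζ s, ζ s⟫ + ε ^ 2)
      + a / 2 * K * Real.exp ((-2) * Ψ s) with hf
    have hfr : ∀ r, f r = Real.sqrt (⟪ζ r, ζ r⟫ + ε ^ 2)
      + a / 2 * K * Real.exp ((-2) * Ψ r) := fun r => rfl
    have hip : ∀ r, 0 < ⟪ζ r, ζ r⟫ + ε ^ 2 := by
      intro r
      have := real_inner_self_nonneg (x := ζ r)
      nlinarith
    have hζcont : ContinuousOn ζ (Set.Ici 0) :=
      fun r hr => ((hζ' r hr).continuousAt).continuousWithinAt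
    have hΨc : Continuous Ψ := continuous_iff_continuousAt.mpr fun r => (hΨ r).continuousAt
    have hcont : ContinuousOn f (Set.Ici 0) := by
      apply ContinuousOn.add
      · exact ((hζcont.inner hζcont).add continuousOn_const).sqrt
      · exact (continuous_const.mul
          (Real.continuous_exp.comp (continuous_const.mul hΨc))).continuousOn
    have hder : ∀ r, 0 ≤ r → HasDerivAt f
        ((⟪ζ r, fderiv ℝ g (X r) (ζ r) + fderiv ℝ (fderiv ℝ g) (X r) (v2 r) (v1 r)⟫
          + ⟪fderiv ℝ g (X r) (ζ r) + fderiv ℝ (fderiv ℝ g) (X r) (v2 r) (v1 r), ζ r⟫)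
          / (2 * Real.sqrt (⟪ζ r, ζ r⟫ + ε ^ 2))
          + a / 2 * K * (Real.exp ((-2) * Ψ r) * ((-2) * ψ r))) r := by
      intro r hr
      have h1 : HasDerivAt (fun s => ⟪ζ s, ζ s⟫ + ε ^ 2)
          (⟪ζ r, fderiv ℝ g (X r) (ζ r) + fderiv ℝ (fderiv ℝ g) (X r) (v2 r) (v1 r)⟫
            + ⟪fderiv ℝ g (X r) (ζ r) + fderiv ℝ (fderiv ℝ g) (X r) (v2 r) (v1 r), ζ r⟫) r :=
        (HasDerivAt.inner ℝ (hζ' r hr) (hζ' r hr)).add_const _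
      exact (h1.sqrt (hip r).ne').add
        ((((hΨ r).const_mul (-2)).exp).const_mul (a / 2 * K))
    have hle : ∀ r, 0 < r →
        ((⟪ζ r, fderiv ℝ g (X r) (ζ r) + fderiv ℝ (fderiv ℝ g) (X r) (v2 r) (v1 r)⟫
          + ⟪fderiv ℝ g (X r) (ζ r) + fderiv ℝ (fderiv ℝ g) (X r) (v2 r) (v1 r), ζ r⟫)
          / (2 * Real.sqrt (⟪ζ r, ζ r⟫ + ε ^ 2))
          + a / 2 * K * (Real.exp ((-2) * Ψ r) * ((-2) * ψ r))) ≤ 0 := by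
      intro r hr
      set B := fderiv ℝ (fderiv ℝ g) (X r) (v2 r) (v1 r) with hB
      set q := Real.sqrt (⟪ζ r, ζ r⟫ + ε ^ 2) with hq
      have hq0 : 0 < q := Real.sqrt_pos.mpr (hip r)
      have hzq : ‖ζ r‖ ≤ q := by
        rw [hq]
        calc ‖ζ r‖ = Real.sqrt (‖ζ r‖ ^ 2) := (Real.sqrt_sq (norm_nonneg _)).symm
          _ ≤ Real.sqrt (⟪ζ r, ζ r⟫ + ε ^ 2) := by
              apply Real.sqrt_le_sqrt
              rw [real_inner_self_eq_norm_sq]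
              nlinarith
      set M : ℝ := a * ψ r * Real.exp ((-2) * Ψ r) * K with hM
      have hM0 : 0 ≤ M := by
        rw [hM]
        have := (hψpos r).le
        positivity
      have hup : ⟪ζ r, fderiv ℝ g (X r) (ζ r) + B⟫ ≤ ‖ζ r‖ * M := by
        rw [inner_add_right]
        have e1 : ⟪ζ r, fderiv ℝ g (X r) (ζ r)⟫ ≤ -(ψ r * ‖ζ r‖ ^ 2) := key2 (ζ r) r hr.le
        have e2 : ⟪ζ r, B⟫ ≤ ‖ζ r‖ * M := by
          calc ⟪ζ r, B⟫ ≤ ‖ζ r‖ * ‖B‖ := real_inner_le_norm _ _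
            _ ≤ ‖ζ r‖ * M := by
                rw [hM]
                exact mul_le_mul_of_nonneg_left (hsrc r hr.le) (norm_nonneg _)
        have e3 : (0:ℝ) ≤ ψ r * ‖ζ r‖ ^ 2 := by
          have := (hψpos r).le
          positivity
        linarith
      have hup2 : ⟪fderiv ℝ g (X r) (ζ r) + B, ζ r⟫ ≤ ‖ζ r‖ * M := by
        rw [real_inner_comm]; exact hup
      have term1 : (⟪ζ r, fderiv ℝ g (X r) (ζ r) + B⟫
          + ⟪fderiv ℝ g (X r) (ζ r) + B, ζ r⟫) / (2 * q) ≤ M := by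
        have h2q : (0:ℝ) < 2 * q := by linarith
        calc (⟪ζ r, fderiv ℝ g (X r) (ζ r) + B⟫ + ⟪fderiv ℝ g (X r) (ζ r) + B, ζ r⟫) / (2 * q)
            ≤ (2 * (‖ζ r‖ * M)) / (2 * q) := by
              apply div_le_div_of_nonneg_right ?_ h2q.le
              linarith
          _ ≤ M := by
              rw [div_le_iff₀ h2q]
              nlinarith [norm_nonneg (ζ r)]
      have term2 : a / 2 * K * (Real.exp ((-2) * Ψ r) * ((-2) * ψ r)) = -M := by
        rw [hM]; ring
      linarith [term1]
    have := mono_aux hcont (fun r hr => hder r hr.le) hle t ht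
    rw [hfr, hfr] at this
    have hf0 : Real.sqrt (⟪ζ 0, ζ 0⟫ + ε ^ 2) + a / 2 * K * Real.exp ((-2) * Ψ 0)
        = ε + a / 2 * K := by
      rw [hζ0, hΨ0]
      simp [Real.sqrt_sq hε.le]
    rw [hf0] at this
    have hζt : ‖ζ t‖ ≤ Real.sqrt (⟪ζ t, ζ t⟫ + ε ^ 2) := by
      calc ‖ζ t‖ = Real.sqrt (‖ζ t‖ ^ 2) := (Real.sqrt_sq (norm_nonneg _)).symm
        _ ≤ _ := by
            apply Real.sqrt_le_sqrt
            rw [real_inner_self_eq_norm_sq]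
            nlinarith
    have hexp0 : (0:ℝ) ≤ a / 2 * K * Real.exp ((-2) * Ψ t) := by positivity
    linarith
  have goal : ‖ζ t‖ ≤ a / 2 * ‖u1‖ * ‖u2‖ := by
    apply le_of_forall_pos_le_add
    intro ε hε
    have := main ε hε
    rw [hK] at this
    linarith [this]
  exact goal
end

section
/- Let g : ℝ^d → ℝ^d be twice continuously differentiable satisfying, for some θ0 > 0 and θ1, θ2, θ3 ≥ 0: (a2) ⟨u, ∇_u g(x)⟩ ≤ −θ0(1+θ1|x|^{θ2})|u|² for all u, x, and (a3) |∇_{u1}∇_{u2} g(x)| ≤ θ3(1+θ1|x|)^{θ2−1}|u1||u2| for all u1, u2, x. Fix t > 0, let X : [0,t] → ℝ^d be continuous, let u1, u2 ∈ ℝ^d, let v_i : [0,t] → ℝ^d (i = 1,2) be differentiable with v_i′(s) = ∇g(X(s)) v_i(s) and v_i(0) = u_i, and let D : [0,t] → ℝ^d be differentiable with D(0) = 0 and D′(s) = ∇g(X(s)) D(s) + (s/t) ∇²g(X(s))[v_2(s), v_1(s)] for all s ∈ [0,t]. Then there exists a constant C, depending only on θ0, θ1, θ2, θ3 (and not on X,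 u1, u2, s, t), such that |D(s)| ≤ C|u1||u2| for all s ∈ [0,t]. -/
open scoped RealInnerProductSpace

private lemma one_le_Kc (θ1 θ2 : ℝ) (hθ1 : 0 ≤ θ1) (hθ2 : 0 ≤ θ2) :
    (1:ℝ) ≤ (1+θ1)^θ2 * 2^θ2 * max 1 θ1⁻¹ := by
  have h1 : (1:ℝ) ≤ (1+θ1)^θ2 := Real.one_le_rpow (by linarith) hθ2
  have h2 : (1:ℝ) ≤ (2:ℝ)^θ2 := Real.one_le_rpow (by norm_num) hθ2
  have h3 : (1:ℝ) ≤ max 1 θ1⁻¹ := le_max_left _ _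
  have h12 : (1:ℝ) * 1 ≤ (1+θ1)^θ2 * 2^θ2 :=
    mul_le_mul h1 h2 zero_le_one (le_trans zero_le_one h1)
  rw [mul_one] at h12
  have := mul_le_mul h12 h3 zero_le_one (le_trans zero_le_one h12)
  rw [mul_one] at this
  linarith

private lemma Kc_bound (θ1 θ2 : ℝ) (hθ1 : 0 ≤ θ1) (hθ2 : 0 ≤ θ2) (r : ℝ) (hr : 0 ≤ r) :
    (1 + θ1 * r) ^ (θ2 - 1) ≤ ((1+θ1)^θ2 * 2^θ2 * max 1 θ1⁻¹) * (1 + θ1 * r ^ θ2) := by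
  have hK1 : (1:ℝ) ≤ (1+θ1)^θ2 * 2^θ2 * max 1 θ1⁻¹ := one_le_Kc θ1 θ2 hθ1 hθ2
  have hb : (1:ℝ) ≤ 1 + θ1 * r := by nlinarith
  have hA0 : (0:ℝ) ≤ θ1 * r ^ θ2 := mul_nonneg hθ1 (Real.rpow_nonneg hr _)
  rcases le_or_gt θ2 1 with h | h
  · have hL : (1 + θ1 * r) ^ (θ2 - 1) ≤ 1 :=
      Real.rpow_le_one_of_one_le_of_nonpos hb (by linarith)
    nlinarith
  · rcases eq_or_lt_of_le hθ1 with h0 | h0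
    · rw [← h0]
      have h2 : (1:ℝ) ≤ (2:ℝ)^θ2 := Real.one_le_rpow (by norm_num) hθ2
      simp [Real.one_rpow]
      linarith
    · -- θ1 > 0, θ2 > 1
      have hrp : (0:ℝ) ≤ r ^ θ2 := Real.rpow_nonneg hr _
      have step1 : (1 + θ1*r) ^ (θ2-1) ≤ (1+θ1*r) ^ θ2 :=
        Real.rpow_le_rpow_of_exponent_le hb (by linarith)
      have step2 : (1+θ1*r) ^ θ2 ≤ ((1+θ1)*(1+r)) ^ θ2 :=
        Real.rpow_le_rpow (by linarith) (by nlinarith) hθ2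
      have step3 : ((1+θ1)*(1+r))^θ2 = (1+θ1)^θ2 * (1+r)^θ2 :=
        Real.mul_rpow (by linarith) (by linarith)
      have step4 : (1+r)^θ2 ≤ 2^θ2 * (1 + r^θ2) := by
        have h2p : (0:ℝ) ≤ (2:ℝ)^θ2 := Real.rpow_nonneg (by norm_num) _
        rcases le_or_gt r 1 with hr1 | hr1
        · have : (1+r)^θ2 ≤ (2:ℝ)^θ2 := Real.rpow_le_rpow (by linarith) (by linarith) hθ2
          nlinarith
        · have h2r : (1+r)^θ2 ≤ (2*r)^θ2 := Real.rpow_le_rpow (by linarith) (by linarith) hθ2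
          have hmr : (2*r)^θ2 = 2^θ2 * r^θ2 := Real.mul_rpow (by norm_num) (by linarith)
          nlinarith
      have step5 : 1 + r^θ2 ≤ max 1 θ1⁻¹ * (1 + θ1 * r^θ2) := by
        rcases le_or_gt 1 θ1 with h1 | h1
        · have : max 1 θ1⁻¹ = 1 := max_eq_left (by
            rw [inv_le_one_iff₀]; right; exact h1)
          rw [this, one_mul]; nlinarith
        · have hmax : max 1 θ1⁻¹ = θ1⁻¹ := max_eq_right (by
            rw [le_inv_comm₀] <;> simp [h0, h1.le] )
          rw [hmax]
          have : θ1⁻¹ * (1 + θ1 * r^θ2) = θ1⁻¹ + r^θ2 := by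
            field_simp
          rw [this]
          have : (1:ℝ) ≤ θ1⁻¹ := (one_le_inv_iff₀.mpr ⟨h0, h1.le⟩)
          linarith
      have hp1 : (0:ℝ) ≤ (1+θ1)^θ2 := Real.rpow_nonneg (by linarith) _
      have hp2 : (0:ℝ) ≤ (2:ℝ)^θ2 := Real.rpow_nonneg (by norm_num) _
      calc (1 + θ1 * r) ^ (θ2 - 1) ≤ (1+θ1*r) ^ θ2 := step1
        _ ≤ ((1+θ1)*(1+r)) ^ θ2 := step2
        _ = (1+θ1)^θ2 * (1+r)^θ2 := step3
        _ ≤ (1+θ1)^θ2 * (2^θ2 * (1 + r^θ2)) := by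
            exact mul_le_mul_of_nonneg_left step4 hp1
        _ ≤ (1+θ1)^θ2 * (2^θ2 * (max 1 θ1⁻¹ * (1 + θ1 * r^θ2))) := by
            have := mul_le_mul_of_nonneg_left step5 hp2
            exact mul_le_mul_of_nonneg_left this hp1
        _ = ((1+θ1)^θ2 * 2^θ2 * max 1 θ1⁻¹) * (1 + θ1 * r ^ θ2) := by ring

set_option maxHeartbeats 1000000 in
theorem stmt11 (θ0 θ1 θ2 θ3 : ℝ)
    (hθ0 : 0 < θ0) (hθ1 : 0 ≤ θ1) (hθ2 : 0 ≤ θ2) (hθ3 : 0 ≤ θ3) :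
    ∃ C : ℝ,
      ∀ (d : ℕ), 1 ≤ d →
      ∀ g : EuclideanSpace ℝ (Fin d) → EuclideanSpace ℝ (Fin d), ContDiff ℝ 2 g →
      (∀ u x : EuclideanSpace ℝ (Fin d),
        ⟪u, fderiv ℝ g x u⟫ ≤ -θ0 * (1 + θ1 * ‖x‖ ^ θ2) * ‖u‖ ^ 2) →
      (∀ u1 u2 x : EuclideanSpace ℝ (Fin d),
        ‖fderiv ℝ (fderiv ℝ g) x u1 u2‖
          ≤ θ3 * (1 + θ1 * ‖x‖) ^ (θ2 - 1) * ‖u1‖ * ‖u2‖) →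
      ∀ t : ℝ, 0 < t →
      ∀ X : ℝ → EuclideanSpace ℝ (Fin d), ContinuousOn X (Set.Icc 0 t) →
      ∀ (u1 u2 : EuclideanSpace ℝ (Fin d))
        (v1 v2 D : ℝ → EuclideanSpace ℝ (Fin d)),
        v1 0 = u1 → v2 0 = u2 →
        (∀ s ∈ Set.Icc (0 : ℝ) t, HasDerivAt v1 (fderiv ℝ g (X s) (v1 s)) s) →
        (∀ s ∈ Set.Icc (0 : ℝ) t, HasDerivAt v2 (fderiv ℝ g (X s) (v2 s)) s) →
        D 0 = 0 →
        (∀ s ∈ Set.Icc (0 : ℝ) t, HasDerivAt D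
          (fderiv ℝ g (X s) (D s)
            + (s / t) • fderiv ℝ (fderiv ℝ g) (X s) (v2 s) (v1 s)) s) →
        ∀ s ∈ Set.Icc (0 : ℝ) t, ‖D s‖ ≤ C * ‖u1‖ * ‖u2‖ := by
  obtain ⟨K, hKdef⟩ : ∃ K : ℝ, K = (1+θ1)^θ2 * 2^θ2 * max 1 θ1⁻¹ := ⟨_, rfl⟩
  have hK1 : (1:ℝ) ≤ K := hKdef ▸ one_le_Kc θ1 θ2 hθ1 hθ2
  refine ⟨θ3 * K / θ0, ?_⟩
  intro d hd g hg ha2 ha3 t ht X hX u1 u2 v1 v2 D hv10 hv20 hv1 hv2 hD0 hD s hs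
  -- the v-norms are non-increasing
  have vbound : ∀ (v : ℝ → EuclideanSpace ℝ (Fin d)),
      (∀ r ∈ Set.Icc (0 : ℝ) t, HasDerivAt v (fderiv ℝ g (X r) (v r)) r) →
      ∀ r ∈ Set.Icc (0 : ℝ) t, ‖v r‖ ≤ ‖v 0‖ := by
    intro v hv r hr
    have hmono : AntitoneOn (fun r => ⟪v r, v r⟫) (Set.Icc 0 t) := by
      apply antitoneOn_of_deriv_nonpos (convex_Icc 0 t)
      · intro x hx
        exact (((hv x hx).inner ℝ (hv x hx)).continuousAt).continuousWithinAt
      · intro x hx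
        rw [interior_Icc] at hx
        exact (((hv x (Set.Ioo_subset_Icc_self hx)).inner ℝ
          (hv x (Set.Ioo_subset_Icc_self hx))).differentiableAt).differentiableWithinAt
      · intro x hx
        rw [interior_Icc] at hx
        have hder := (hv x (Set.Ioo_subset_Icc_self hx)).inner ℝ
          (hv x (Set.Ioo_subset_Icc_self hx))
        rw [hder.deriv]
        have h2 := ha2 (v x) (X x)
        have hAx : (0:ℝ) ≤ θ1 * ‖X x‖ ^ θ2 := mul_nonneg hθ1 (Real.rpow_nonneg (norm_nonneg _) _)
        have hn : 0 ≤ θ0 * (1 + θ1 * ‖X x‖ ^ θ2) * ‖v x‖ ^ 2 := by positivity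
        have h3 : ⟪v x, fderiv ℝ g (X x) (v x)⟫ ≤ 0 := by nlinarith [h2, hn]
        have hsymm : ⟪fderiv ℝ g (X x) (v x), v x⟫ = ⟪v x, fderiv ℝ g (X x) (v x)⟫ :=
          real_inner_comm _ _
        linarith
    have h0mem : (0:ℝ) ∈ Set.Icc (0:ℝ) t := ⟨le_refl _, ht.le⟩
    have hle := hmono h0mem hr hr.1
    simp only [real_inner_self_eq_norm_sq] at hle
    have h1 := norm_nonneg (v r); have h2 := norm_nonneg (v 0)
    nlinarith [hle]
  have hv1le : ∀ r ∈ Set.Icc (0 : ℝ) t, ‖v1 r‖ ≤ ‖u1‖ := by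
    intro r hr; rw [← hv10]; exact vbound v1 hv1 r hr
  have hv2le : ∀ r ∈ Set.Icc (0 : ℝ) t, ‖v2 r‖ ≤ ‖u2‖ := by
    intro r hr; rw [← hv20]; exact vbound v2 hv2 r hr
  obtain ⟨M, hMdef⟩ : ∃ M : ℝ, M = ‖u1‖ * ‖u2‖ := ⟨_, rfl⟩
  have hM0 : 0 ≤ M := by rw [hMdef]; positivity
  obtain ⟨c, hcdef⟩ : ∃ c : ℝ, c = θ3 * K / θ0 * M := ⟨_, rfl⟩
  have hc0 : 0 ≤ c := by
    rw [hcdef, hMdef]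
    have : (0:ℝ) ≤ θ3 * K := mul_nonneg hθ3 (by linarith)
    positivity
  have hθ0c : θ0 * c = θ3 * K * M := by rw [hcdef]; field_simp
  suffices h : ‖D s‖ ≤ c by
    rw [hcdef, hMdef, ← mul_assoc] at h; exact h
  have key : ∀ ε : ℝ, 0 < ε → ‖D s‖ ≤ c + ε := by
    intro ε hε
    obtain ⟨φ', hφ'def⟩ : ∃ f : ℝ → ℝ, f = fun r => 2 * ⟪D r, fderiv ℝ g (X r) (D r)
      + (r / t) • fderiv ℝ (fderiv ℝ g) (X r) (v2 r) (v1 r)⟫ := ⟨_, rfl⟩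
    have hφd : ∀ r ∈ Set.Icc (0:ℝ) t, HasDerivAt (fun r => ⟪D r, D r⟫) (φ' r) r := by
      intro r hr
      have h := (hD r hr).inner ℝ (hD r hr)
      have hsymm : ⟪fderiv ℝ g (X r) (D r)
          + (r / t) • fderiv ℝ (fderiv ℝ g) (X r) (v2 r) (v1 r), D r⟫
          = ⟪D r, fderiv ℝ g (X r) (D r)
          + (r / t) • fderiv ℝ (fderiv ℝ g) (X r) (v2 r) (v1 r)⟫ := real_inner_comm _ _
      have heq : φ' r = ⟪D r, fderiv ℝ g (X r) (D r)
          + (r / t) • fderiv ℝ (fderiv ℝ g) (X r) (v2 r) (v1 r)⟫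
          + ⟪fderiv ℝ g (X r) (D r)
          + (r / t) • fderiv ℝ (fderiv ℝ g) (X r) (v2 r) (v1 r), D r⟫ := by
        simp only [hφ'def]; rw [hsymm]; ring
      rw [heq]; exact h
    have bound : ∀ x ∈ Set.Ico (0:ℝ) t, ⟪D x, D x⟫ = (c + ε)^2 → φ' x < 0 := by
      intro x hx hcross
      have hxI : x ∈ Set.Icc (0:ℝ) t := ⟨hx.1, hx.2.le⟩
      obtain ⟨ψ, hψdef⟩ : ∃ ψ : ℝ, ψ = ‖D x‖ := ⟨_, rfl⟩
      have hψ0 : 0 ≤ ψ := hψdef ▸ norm_nonneg _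
      have hψ : ψ = c + ε := by
        rw [real_inner_self_eq_norm_sq, ← hψdef] at hcross
        have hfac : (ψ - (c + ε)) * (ψ + (c + ε)) = 0 := by linear_combination hcross
        rcases mul_eq_zero.mp hfac with h | h
        · linarith
        · linarith
      obtain ⟨A, hAdef⟩ : ∃ A : ℝ, A = 1 + θ1 * ‖X x‖ ^ θ2 := ⟨_, rfl⟩
      have hA1 : (1:ℝ) ≤ A := by
        have : (0:ℝ) ≤ θ1 * ‖X x‖ ^ θ2 :=
          mul_nonneg hθ1 (Real.rpow_nonneg (norm_nonneg _) _)
        rw [hAdef]; linarith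
      obtain ⟨W, hWdef⟩ : ∃ W : EuclideanSpace ℝ (Fin d),
        W = fderiv ℝ (fderiv ℝ g) (X x) (v2 x) (v1 x) := ⟨_, rfl⟩
      have hKA0 : (0:ℝ) ≤ K * A := by nlinarith
      have hW : ‖W‖ ≤ θ3 * K * A * M := by
        have h3 := ha3 (v2 x) (v1 x) (X x)
        rw [← hWdef] at h3
        have hKA : (1 + θ1 * ‖X x‖) ^ (θ2 - 1) ≤ K * A := by
          rw [hKdef, hAdef]
          exact Kc_bound θ1 θ2 hθ1 hθ2 (‖X x‖) (norm_nonneg _)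
        have hv1x := hv1le x hxI
        have hv2x := hv2le x hxI
        have hv1n := norm_nonneg (v1 x); have hv2n := norm_nonneg (v2 x)
        have hu2n := norm_nonneg u2
        have m1 : θ3 * (1 + θ1 * ‖X x‖) ^ (θ2 - 1) ≤ θ3 * (K * A) :=
          mul_le_mul_of_nonneg_left hKA hθ3
        have m2 : θ3 * (1 + θ1 * ‖X x‖) ^ (θ2 - 1) * ‖v2 x‖ ≤ θ3 * (K * A) * ‖u2‖ :=
          mul_le_mul m1 hv2x hv2n (mul_nonneg hθ3 hKA0)
        have m3 : θ3 * (1 + θ1 * ‖X x‖) ^ (θ2 - 1) * ‖v2 x‖ * ‖v1 x‖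
            ≤ θ3 * (K * A) * ‖u2‖ * ‖u1‖ :=
          mul_le_mul m2 hv1x hv1n (mul_nonneg (mul_nonneg hθ3 hKA0) hu2n)
        calc ‖W‖ ≤ θ3 * (1 + θ1 * ‖X x‖) ^ (θ2 - 1) * ‖v2 x‖ * ‖v1 x‖ := h3
          _ ≤ θ3 * (K * A) * ‖u2‖ * ‖u1‖ := m3
          _ = θ3 * K * A * M := by rw [hMdef]; ring
      have h1 : ⟪D x, fderiv ℝ g (X x) (D x)⟫ ≤ -θ0 * A * ψ^2 := by
        have := ha2 (D x) (X x)
        rw [← hAdef, ← hψdef] at this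
        exact this
      have hip : ⟪D x, W⟫ ≤ ψ * ‖W‖ := by
        rw [hψdef]; exact real_inner_le_norm _ _
      have hxt0 : 0 ≤ x / t := div_nonneg hx.1 ht.le
      have hxt1 : x / t ≤ 1 := (div_le_one ht).mpr hx.2.le
      have hWn : 0 ≤ ‖W‖ := norm_nonneg _
      have h2 : (x / t) * ⟪D x, W⟫ ≤ ψ * (θ3 * K * A * M) := by
        have h2a : (x/t) * ⟪D x, W⟫ ≤ (x/t) * (ψ * ‖W‖) :=
          mul_le_mul_of_nonneg_left hip hxt0
        have h2b : (x/t) * (ψ * ‖W‖) ≤ 1 * (ψ * ‖W‖) :=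
          mul_le_mul_of_nonneg_right hxt1 (mul_nonneg hψ0 hWn)
        have h2c : ψ * ‖W‖ ≤ ψ * (θ3 * K * A * M) := mul_le_mul_of_nonneg_left hW hψ0
        rw [one_mul] at h2b
        exact le_trans h2a (le_trans h2b h2c)
      have hφ'val : φ' x = 2 * (⟪D x, fderiv ℝ g (X x) (D x)⟫ + (x/t) * ⟪D x, W⟫) := by
        simp only [hφ'def]
        rw [hWdef, inner_add_right, real_inner_smul_right]
      rw [hφ'val]
      have hψpos : 0 < ψ := by rw [hψ]; linarith
      have hcomb : ⟪D x, fderiv ℝ g (X x) (D x)⟫ + (x/t) * ⟪D x, W⟫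
          ≤ -θ0 * A * ψ^2 + ψ * (θ0 * c * A) := by
        have : ψ * (θ0 * c * A) = ψ * ((θ0 * c) * A) := by ring
        rw [this, hθ0c]
        nlinarith [h1, h2]
      have hfin : -θ0 * A * ψ^2 + ψ * (θ0 * c * A) = -(A * (ψ * (θ0 * ε))) := by
        rw [hψ]; ring
      have hpos : 0 < ψ * (θ0 * ε) := mul_pos hψpos (mul_pos hθ0 hε)
      nlinarith [hcomb, hfin, hpos, mul_le_mul_of_nonneg_right hA1 hpos.le]
    have hcont : ContinuousOn (fun r => ⟪D r, D r⟫) (Set.Icc (0:ℝ) t) := by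
      intro r hr
      exact (hφd r hr).continuousAt.continuousWithinAt
    have ha0 : ⟪D 0, D 0⟫ ≤ (c + ε)^2 := by
      rw [hD0]; simp only [inner_zero_right]; positivity
    have hfence := image_le_of_deriv_right_lt_deriv_boundary (f := fun r => ⟪D r, D r⟫)
      (f' := φ') (B := fun _ => (c + ε)^2) (B' := fun _ => 0) hcont
      (fun x hx => (hφd x ⟨hx.1, hx.2.le⟩).hasDerivWithinAt)
      ha0 (fun x => hasDerivAt_const x _) bound hs
    simp only [real_inner_self_eq_norm_sq] at hfence
    have hsq := Real.sqrt_le_sqrt hfence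
    rwa [Real.sqrt_sq (norm_nonneg _), Real.sqrt_sq (by linarith)] at hsq
  by_contra hcon
  push_neg at hcon
  obtain ⟨ε, hε, hlt⟩ : ∃ ε : ℝ, 0 < ε ∧ c + ε < ‖D s‖ := ⟨(‖D s‖ - c)/2, by linarith, by linarith⟩
  exact absurd (key ε hε) (by linarith)
end

section
/- Let X_1, …, X_n be independent integrable random vectors in ℝ^d with E[X_i] = 0, let (X′_1, …, X′_n) be an independent copy of (X_1, …, X_n) (independent of it), and let I be uniformly distributed on {1, …, n} and independent of all the X_i and X′_i. Set W = n^{−1/2} ∑_{i=1}^n X_i and δ = n^{−1/2}(X′_I − X_I). Then the conditional expectation of δ given the σ-algebra generated by W satisfies E[δ | σ(W)] = −W/n almost surely. -/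
/-!
Conditional expectations given `σ(W)` are tested on the sets `W ⁻¹' t`. As `I` is uniform and
independent of everything else, `∫_{W ∈ t} X_I = n⁻¹ ∑ᵢ ∫_{W ∈ t} X_i = n^{-1/2} ∫_{W ∈ t} W`,
while `∫_{W ∈ t} X'_I = n⁻¹ ∑ᵢ ∫_{W ∈ t} X'_i = 0`, since `W` is a function of the `X_i` alone,
hence independent of `X'_i`, and `E[X'_i] = E[X_i] = 0`.
-/

open MeasureTheory ProbabilityTheory

namespace ProbabilityTheory

theorem iIndepFun.indepFun_sum_inl_inr {Ω ι E : Type*} {mΩ : MeasurableSpace Ω} {μ : Measure Ω}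
    [Fintype ι] [AddCommMonoid E] [MeasurableSpace E] [MeasurableAdd₂ E] {X X' : ι → Ω → E}
    (hind : iIndepFun (Sum.elim X X') μ) (hX : ∀ i, Measurable (X i))
    (hX' : ∀ i, Measurable (X' i)) (j : ι) :
    IndepFun (fun ω => ∑ i, X i ω) (X' j) μ := by
  have h := hind.indepFun_finsetSum_of_notMem (Sum.forall.mpr ⟨hX, hX'⟩)
    (s := Finset.univ.map .inl) (i := .inr j) (by simp)
  rw [Finset.sum_map] at h
  exact h.congr (ae_of_all _ fun ω => by simp) (ae_of_all _ fun _ => rfl)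

theorem IndepFun.setIntegral_preimage_eq_zero {Ω β E : Type*} {mΩ : MeasurableSpace Ω}
    {μ : Measure Ω} [MeasurableSpace β] [NormedAddCommGroup E] [NormedSpace ℝ E]
    [MeasurableSpace E] [BorelSpace E] {W : Ω → β} {Y : Ω → E}
    (hind : IndepFun W Y μ) (hW : Measurable W) (hY : AEStronglyMeasurable Y μ)
    (hmean : ∫ ω, Y ω ∂μ = 0) {t : Set β} (ht : MeasurableSet t) :
    ∫ ω in W ⁻¹' t, Y ω ∂μ = 0 := by
  have hχ : Measurable (t.indicator (1 : β → ℝ)) := measurable_one.indicator ht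
  have hind' : IndepFun (fun ω => t.indicator (1 : β → ℝ) (W ω)) Y μ :=
    hind.comp hχ measurable_id
  calc ∫ ω in W ⁻¹' t, Y ω ∂μ = ∫ ω, t.indicator (1 : β → ℝ) (W ω) • Y ω ∂μ := by
        rw [← integral_indicator (hW ht)]
        congr 1 with ω
        by_cases h : W ω ∈ t <;> simp [h]
    _ = 0 := by
        rw [hind'.integral_fun_smul_eq_smul_integral (hχ.comp hW).aestronglyMeasurable hY, hmean,
          smul_zero]

end ProbabilityTheory

section RandomIndex

variable {Ω ι E : Type*} [Fintype ι] [NormedAddCommGroup E]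

theorem apply_index_eq_sum_indicator (I : Ω → ι) (Y : ι → Ω → E) :
    (fun ω => Y (I ω) ω) = fun ω => ∑ i, (I ⁻¹' {i}).indicator (Y i) ω := by
  ext ω
  classical
  simp [Set.indicator_apply, eq_comm]

variable {mΩ : MeasurableSpace Ω} {μ : Measure Ω} [MeasurableSpace ι] [MeasurableSingletonClass ι]
  {I : Ω → ι} {Y : ι → Ω → E}

theorem integrable_apply_index (hI : Measurable I) (hY : ∀ i, Integrable (Y i) μ) :
    Integrable (fun ω => Y (I ω) ω) μ := by
  rw [apply_index_eq_sum_indicator]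
  exact integrable_finsetSum _ fun i _ => (hY i).indicator (hI (measurableSet_singleton i))

variable [NormedSpace ℝ E] [MeasurableSpace E] [BorelSpace E]

theorem integral_apply_index (hI : Measurable I)
    (hY : ∀ i, Integrable (Y i) μ) (hind : IndepFun I (fun ω i => Y i ω) μ) :
    ∫ ω, Y (I ω) ω ∂μ = ∑ i, μ.real (I ⁻¹' {i}) • ∫ ω, Y i ω ∂μ := by
  rw [apply_index_eq_sum_indicator,
    integral_finsetSum _ fun i _ => (hY i).indicator (hI (measurableSet_singleton i))]
  refine Finset.sum_congr rfl fun i _ => ?_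
  have hIi : MeasurableSet (I ⁻¹' {i}) := hI (measurableSet_singleton i)
  have hind_i : IndepFun ((I ⁻¹' {i}).indicator (1 : Ω → ℝ)) (Y i) μ :=
    hind.comp (measurable_one.indicator (measurableSet_singleton i)) (measurable_pi_apply i)
  calc ∫ ω, (I ⁻¹' {i}).indicator (Y i) ω ∂μ
      = ∫ ω, (I ⁻¹' {i}).indicator (1 : Ω → ℝ) ω • Y i ω ∂μ := by
        congr 1 with ω
        by_cases h : I ω = i <;> simp [h]
    _ = μ.real (I ⁻¹' {i}) • ∫ ω, Y i ω ∂μ := by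
        rw [hind_i.integral_fun_smul_eq_smul_integral
          (measurable_one.indicator hIi).aestronglyMeasurable (hY i).aestronglyMeasurable,
          integral_indicator_one hIi]

theorem setIntegral_apply_index (hI : Measurable I)
    (hY : ∀ i, Integrable (Y i) μ) {s : Set Ω} (hs : MeasurableSet s)
    (hind : IndepFun I (s.indicator fun ω i => Y i ω) μ) :
    ∫ ω in s, Y (I ω) ω ∂μ = ∑ i, μ.real (I ⁻¹' {i}) • ∫ ω in s, Y i ω ∂μ := by
  have hcomm : (s.indicator fun ω i => Y i ω) = fun ω i => s.indicator (Y i) ω := by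
    ext ω i
    by_cases h : ω ∈ s <;> simp [h]
  rw [hcomm] at hind
  simp_rw [← integral_indicator hs]
  exact integral_apply_index hI (fun i => (hY i).indicator hs) hind

end RandomIndex

theorem stmt15_general (n d : ℕ)
    (Ω : Type) (mΩ : MeasurableSpace Ω) (μ : Measure Ω)
    (hμ : IsProbabilityMeasure μ)
    (X X' : Fin n → Ω → EuclideanSpace ℝ (Fin d))
    (hXm : ∀ i, Measurable (X i)) (hX'm : ∀ i, Measurable (X' i))
    (hint : ∀ i, Integrable (X i) μ)
    (hmean : ∀ i, ∫ ω, X i ω ∂μ = 0)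
    -- the 2n random vectors X_1, …, X_n, X'_1, …, X'_n are mutually independent
    (hindep : iIndepFun (Sum.elim X X') μ)
    -- (X'_1, …, X'_n) has the same (joint) law as (X_1, …, X_n)
    (hcopy : Measure.map (fun ω => fun i => X' i ω) μ
      = Measure.map (fun ω => fun i => X i ω) μ)
    (I : Ω → Fin n) (hIm : Measurable I)
    -- I is uniform on {1, …, n}
    (hIunif : ∀ i, μ (I ⁻¹' {i}) = 1 / n)
    -- I is independent of all the X_i and X'_i
    (hIindep : IndepFun I (fun ω => (fun i => X i ω, fun i => X' i ω)) μ)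
    (W δ : Ω → EuclideanSpace ℝ (Fin d))
    (hW : ∀ ω, W ω = (Real.sqrt n)⁻¹ • ∑ i, X i ω)
    (hδ : ∀ ω, δ ω = (Real.sqrt n)⁻¹ • (X' (I ω) ω - X (I ω) ω)) :
    μ[δ | MeasurableSpace.comap W inferInstance]
      =ᵐ[μ] fun ω => (-(n : ℝ)⁻¹) • W ω := by
  obtain rfl : W = fun ω => (Real.sqrt n)⁻¹ • ∑ i, X i ω := funext hW
  obtain rfl : δ = fun ω => (Real.sqrt n)⁻¹ • (X' (I ω) ω - X (I ω) ω) := funext hδ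
  set c := (Real.sqrt n)⁻¹
  set W := fun ω => c • ∑ i, X i ω
  have hWm : Measurable W := by fun_prop
  have hident : ∀ i, IdentDistrib (X' i) (X i) μ μ := fun i =>
    (IdentDistrib.mk (measurable_pi_lambda _ hX'm).aemeasurable
      (measurable_pi_lambda _ hXm).aemeasurable hcopy).comp (measurable_pi_apply i)
  have hint' : ∀ i, Integrable (X' i) μ := fun i => (hident i).integrable_iff.mpr (hint i)
  have hunif : ∀ i, μ.real (I ⁻¹' {i}) = (n : ℝ)⁻¹ := fun i => by
    simp [measureReal_def, hIunif i]
  refine (ae_eq_condExp_of_forall_setIntegral_eq hWm.comap_le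
    (((integrable_apply_index hIm hint').sub (integrable_apply_index hIm hint)).smul c)
    (fun s _ _ => (((integrable_finsetSum _ fun i _ => hint i).smul c).smul
      (-(n : ℝ)⁻¹)).integrableOn) ?_ ((comap_measurable W).const_smul _).aestronglyMeasurable).symm
  rintro s ⟨t, ht, rfl⟩ -
  have hX'_zero : ∀ i, ∫ ω in W ⁻¹' t, X' i ω ∂μ = 0 := fun i =>
    ((hindep.indepFun_sum_inl_inr hXm hX'm i).comp (measurable_const_smul c)
      measurable_id).setIntegral_preimage_eq_zero hWm (hint' i).aestronglyMeasurable
      ((hident i).integral_eq.trans (hmean i)) ht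
  -- `{W ∈ t}` is determined by `(X, X')`, so restricting to it keeps `I` independent of `(X, X')`.
  have hT := (by fun_prop : Measurable fun p : (Fin n → EuclideanSpace ℝ (Fin d)) ×
    (Fin n → EuclideanSpace ℝ (Fin d)) => c • ∑ i, p.1 i) ht
  have hIX := setIntegral_apply_index hIm hint (hWm ht)
    (hIindep.comp measurable_id (measurable_fst.indicator hT))
  have hIX' := setIntegral_apply_index hIm hint' (hWm ht)
    (hIindep.comp measurable_id (measurable_snd.indicator hT))
  simp only [Pi.smul_apply, Pi.sub_apply]
  rw [integral_smul, integral_smul, integral_smul, integral_sub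
    (integrable_apply_index hIm hint').integrableOn (integrable_apply_index hIm hint).integrableOn,
    hIX, hIX', integral_finsetSum _ fun i _ => (hint i).integrableOn]
  simp only [hunif, hX'_zero, smul_zero, Finset.sum_const_zero, zero_sub, ← Finset.smul_sum]
  module

theorem stmt15 (n d : ℕ) (hn : 1 ≤ n) (hd : 1 ≤ d)
    (Ω : Type) (mΩ : MeasurableSpace Ω) (μ : Measure Ω)
    (hμ : IsProbabilityMeasure μ)
    (X X' : Fin n → Ω → EuclideanSpace ℝ (Fin d))
    (hXm : ∀ i, Measurable (X i)) (hX'm : ∀ i, Measurable (X' i))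
    (hint : ∀ i, Integrable (X i) μ)
    (hmean : ∀ i, ∫ ω, X i ω ∂μ = 0)
    -- the 2n random vectors X_1, …, X_n, X'_1, …, X'_n are mutually independent
    (hindep : iIndepFun (Sum.elim X X') μ)
    -- (X'_1, …, X'_n) has the same (joint) law as (X_1, …, X_n)
    (hcopy : Measure.map (fun ω => fun i => X' i ω) μ
      = Measure.map (fun ω => fun i => X i ω) μ)
    (I : Ω → Fin n) (hIm : Measurable I)
    -- I is uniform on {1, …, n}
    (hIunif : ∀ i, μ (I ⁻¹' {i}) = 1 / n)
    -- I is independent of all the X_i and X'_i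
    (hIindep : IndepFun I (fun ω => (fun i => X i ω, fun i => X' i ω)) μ)
    (W δ : Ω → EuclideanSpace ℝ (Fin d))
    (hW : ∀ ω, W ω = (Real.sqrt n)⁻¹ • ∑ i, X i ω)
    (hδ : ∀ ω, δ ω = (Real.sqrt n)⁻¹ • (X' (I ω) ω - X (I ω) ω)) :
    μ[δ | MeasurableSpace.comap W inferInstance]
      =ᵐ[μ] fun ω => (-(n : ℝ)⁻¹) • W ω :=
  stmt15_general n d Ω mΩ μ hμ X X' hXm hX'm hint hmean hindep hcopy I hIm hIunif hIindep W δ hW hδ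
end

section
/- Let X_1, …, X_n be independent random vectors in ℝ^d with |X_i| ≤ β almost surely and ∑_{i=1}^n E[X_i X_iᵀ] = n I_d (i.e. ∑_i E[X_{ij} X_{ik}] = n δ_{jk} for all j, k). Then E[ ‖ (1/n) ∑_{i=1}^n X_i X_iᵀ − I_d ‖_{HS} ] ≤ β √(d/n), where ‖·‖_{HS} denotes the Hilbert–Schmidt (Frobenius) norm of a d×d matrix, ‖A‖_{HS} = (∑_{j,k} A_{jk}²)^{1/2}. -/
/-!
Each entry of `S/n - I`, where `S = ∑ᵢ Xᵢ Xᵢᵀ`, is `n⁻¹` times a centred sum of the independent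
bounded variables `Xᵢⱼ Xᵢₖ`, so its second moment is at most `n⁻² ∑ᵢ 𝔼[(Xᵢⱼ Xᵢₖ)²]`. Summed over
`j, k` this is `n⁻² ∑ᵢ 𝔼|Xᵢ|⁴ ≤ n⁻² β² ∑ᵢ 𝔼|Xᵢ|² = β² d / n`, because `∑ᵢ 𝔼|Xᵢ|²` is the trace `n d`
of `∑ᵢ 𝔼[Xᵢ Xᵢᵀ] = n I`. Jensen's inequality for the square root turns this bound on
`𝔼‖S/n - I‖²_HS` into the claim.
-/

open MeasureTheory ProbabilityTheory

theorem integral_sqrt_le_sqrt_integral {Ω : Type*} [MeasurableSpace Ω] {μ : Measure Ω}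
    [IsProbabilityMeasure μ] {f : Ω → ℝ} (hf₀ : 0 ≤ᵐ[μ] f) (hf : Integrable f μ) :
    ∫ ω, √(f ω) ∂μ ≤ √(∫ ω, f ω ∂μ) := by
  have hsqrt : Integrable (fun ω => √(f ω)) μ := by
    refine (hf.add (integrable_const 1)).mono'
      (Real.continuous_sqrt.comp_aestronglyMeasurable hf.aestronglyMeasurable) ?_
    filter_upwards [hf₀] with ω hω
    rw [Real.norm_of_nonneg (Real.sqrt_nonneg _), Pi.add_apply]
    nlinarith [Real.sq_sqrt (hω : 0 ≤ f ω), Real.sqrt_nonneg (f ω)]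
  exact Real.strictConcaveOn_sqrt.concaveOn.le_map_integral Real.continuous_sqrt.continuousOn
    isClosed_Ici hf₀ hf hsqrt

theorem integral_sq_sum_sub_sum_integral_le {Ω ι : Type*} [MeasurableSpace Ω] {μ : Measure Ω}
    [IsProbabilityMeasure μ] {Y : ι → Ω → ℝ} {s : Finset ι} (hY : ∀ i ∈ s, MemLp (Y i) 2 μ)
    (hindep : Set.Pairwise ↑s fun i j => Y i ⟂ᵢ[μ] Y j) :
    ∫ ω, (∑ i ∈ s, Y i ω - ∑ i ∈ s, μ[Y i]) ^ 2 ∂μ ≤ ∑ i ∈ s, ∫ ω, Y i ω ^ 2 ∂μ := by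
  have hsum : MemLp (∑ i ∈ s, Y i) 2 μ := memLp_finsetSum' s hY
  calc ∫ ω, (∑ i ∈ s, Y i ω - ∑ i ∈ s, μ[Y i]) ^ 2 ∂μ = Var[∑ i ∈ s, Y i; μ] := by
        rw [variance_eq_integral hsum.aemeasurable]
        simp only [Finset.sum_apply]
        rw [integral_finsetSum s fun i hi => (hY i hi).integrable one_le_two]
    _ = ∑ i ∈ s, Var[Y i; μ] := IndepFun.variance_sum hY hindep
    _ ≤ ∑ i ∈ s, ∫ ω, Y i ω ^ 2 ∂μ :=
        Finset.sum_le_sum fun i hi => variance_le_expectation_sq (hY i hi).aestronglyMeasurable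

theorem EuclideanSpace.norm_pow_four_eq_sum_sum {κ : Type*} [Fintype κ]
    (v : EuclideanSpace ℝ κ) : ‖v‖ ^ 4 = ∑ j, ∑ k, (v j * v k) ^ 2 := by
  rw [show 4 = 2 * 2 from rfl, pow_mul, EuclideanSpace.real_norm_sq_eq, sq, Finset.sum_mul_sum]
  simp only [mul_pow]

section BoundedRandomVector

variable {Ω κ : Type*} [MeasurableSpace Ω] {μ : Measure Ω} [IsFiniteMeasure μ] [Fintype κ]
  {V : Ω → EuclideanSpace ℝ κ} {β : ℝ}

theorem memLp_apply_mul_apply (hV : AEStronglyMeasurable V μ) (hbd : ∀ᵐ ω ∂μ, ‖V ω‖ ≤ β)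
    (j k : κ) (p : ENNReal) : MemLp (fun ω => V ω j * V ω k) p μ := by
  refine MemLp.of_bound (((EuclideanSpace.proj j).continuous.comp_aestronglyMeasurable hV).mul
    ((EuclideanSpace.proj k).continuous.comp_aestronglyMeasurable hV)) (β ^ 2) ?_
  filter_upwards [hbd] with ω hω
  rw [norm_mul, sq]
  exact mul_le_mul ((PiLp.norm_apply_le _ j).trans hω) ((PiLp.norm_apply_le _ k).trans hω)
    (norm_nonneg _) ((norm_nonneg _).trans hω)

theorem integral_norm_sq_eq_sum (hV : AEStronglyMeasurable V μ) (hbd : ∀ᵐ ω ∂μ, ‖V ω‖ ≤ β) :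
    ∫ ω, ‖V ω‖ ^ 2 ∂μ = ∑ j, ∫ ω, V ω j * V ω j ∂μ := by
  simp_rw [EuclideanSpace.real_norm_sq_eq, sq]
  exact integral_finsetSum _ fun j _ => (memLp_apply_mul_apply hV hbd j j 1).integrable le_rfl

theorem sum_sum_integral_sq_apply_mul_apply_le (hV : AEStronglyMeasurable V μ)
    (hbd : ∀ᵐ ω ∂μ, ‖V ω‖ ≤ β) :
    ∑ j, ∑ k, ∫ ω, (V ω j * V ω k) ^ 2 ∂μ ≤ β ^ 2 * ∫ ω, ‖V ω‖ ^ 2 ∂μ := by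
  have hint : ∀ j k, Integrable (fun ω => (V ω j * V ω k) ^ 2) μ := fun j k =>
    (memLp_apply_mul_apply hV hbd j k 2).integrable_sq
  have hnorm : Integrable (fun ω => ‖V ω‖ ^ 2) μ :=
    (MemLp.of_bound hV.norm β (by simpa using hbd) : MemLp _ 2 μ).integrable_sq
  have hsum : Integrable (fun ω => ∑ j, ∑ k, (V ω j * V ω k) ^ 2) μ :=
    integrable_finsetSum _ fun j _ => integrable_finsetSum _ fun k _ => hint j k
  calc ∑ j, ∑ k, ∫ ω, (V ω j * V ω k) ^ 2 ∂μ = ∫ ω, ∑ j, ∑ k, (V ω j * V ω k) ^ 2 ∂μ := by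
        rw [integral_finsetSum _ fun j _ => integrable_finsetSum _ fun k _ => hint j k]
        exact Finset.sum_congr rfl fun j _ => (integral_finsetSum _ fun k _ => hint j k).symm
    _ ≤ ∫ ω, β ^ 2 * ‖V ω‖ ^ 2 ∂μ := by
        refine integral_mono_ae hsum (hnorm.const_mul _) ?_
        filter_upwards [hbd] with ω hω
        rw [← EuclideanSpace.norm_pow_four_eq_sum_sum, show 4 = 2 + 2 from rfl, pow_add]
        exact mul_le_mul_of_nonneg_right (pow_le_pow_left₀ (norm_nonneg _) hω 2) (by positivity)
    _ = β ^ 2 * ∫ ω, ‖V ω‖ ^ 2 ∂μ := integral_const_mul _ _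

end BoundedRandomVector

section IndependentRandomVectors

variable {Ω ι κ : Type*} [MeasurableSpace Ω] {μ : Measure Ω} [Fintype ι] [Fintype κ]
  {X : ι → Ω → EuclideanSpace ℝ κ} {β : ℝ}

/-- `‖∑ᵢ (Xᵢ Xᵢᵀ - 𝔼[Xᵢ Xᵢᵀ])‖²_HS` at `ω`. -/
noncomputable def centeredScatterHSNormSq (μ : Measure Ω) (X : ι → Ω → EuclideanSpace ℝ κ)
    (ω : Ω) : ℝ :=
  ∑ j, ∑ k, (∑ i, X i ω j * X i ω k - ∑ i, ∫ ω', X i ω' j * X i ω' k ∂μ) ^ 2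

theorem integrable_sq_sum_apply_mul_apply_sub [IsFiniteMeasure μ]
    (hX : ∀ i, AEStronglyMeasurable (X i) μ)
    (hbd : ∀ i, ∀ᵐ ω ∂μ, ‖X i ω‖ ≤ β) (j k : κ) (c : ℝ) :
    Integrable (fun ω => (∑ i, X i ω j * X i ω k - c) ^ 2) μ :=
  ((memLp_finsetSum _ fun i _ => memLp_apply_mul_apply (hX i) (hbd i) j k 2).sub
    (memLp_const c)).integrable_sq

theorem integrable_centeredScatterHSNormSq [IsFiniteMeasure μ]
    (hX : ∀ i, AEStronglyMeasurable (X i) μ)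
    (hbd : ∀ i, ∀ᵐ ω ∂μ, ‖X i ω‖ ≤ β) : Integrable (centeredScatterHSNormSq μ X) μ :=
  integrable_finsetSum _ fun j _ => integrable_finsetSum _ fun k _ =>
    integrable_sq_sum_apply_mul_apply_sub hX hbd j k _

theorem integral_centeredScatterHSNormSq_le [IsProbabilityMeasure μ]
    (hX : ∀ i, AEStronglyMeasurable (X i) μ)
    (hindep : Pairwise fun i i' => X i ⟂ᵢ[μ] X i') (hbd : ∀ i, ∀ᵐ ω ∂μ, ‖X i ω‖ ≤ β) :
    ∫ ω, centeredScatterHSNormSq μ X ω ∂μ ≤ β ^ 2 * ∑ i, ∫ ω, ‖X i ω‖ ^ 2 ∂μ := by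
  have hentry (j k : κ) :
      ∫ ω, (∑ i, X i ω j * X i ω k - ∑ i, ∫ ω', X i ω' j * X i ω' k ∂μ) ^ 2 ∂μ ≤
        ∑ i, ∫ ω, (X i ω j * X i ω k) ^ 2 ∂μ := by
    have hφ : Measurable fun v : EuclideanSpace ℝ κ => v j * v k := by fun_prop
    exact integral_sq_sum_sub_sum_integral_le
      (fun i _ => memLp_apply_mul_apply (hX i) (hbd i) j k 2)
      fun i _ i' _ hii' => (hindep hii').comp hφ hφ
  calc ∫ ω, centeredScatterHSNormSq μ X ω ∂μ
      = ∑ j, ∑ k, ∫ ω, (∑ i, X i ω j * X i ω k - ∑ i, ∫ ω', X i ω' j * X i ω' k ∂μ) ^ 2 ∂μ := by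
        unfold centeredScatterHSNormSq
        rw [integral_finsetSum _ fun j _ => integrable_finsetSum _ fun k _ =>
          integrable_sq_sum_apply_mul_apply_sub hX hbd j k _]
        exact Finset.sum_congr rfl fun j _ => integral_finsetSum _ fun k _ =>
          integrable_sq_sum_apply_mul_apply_sub hX hbd j k _
    _ ≤ ∑ j, ∑ k, ∑ i, ∫ ω, (X i ω j * X i ω k) ^ 2 ∂μ :=
        Finset.sum_le_sum fun j _ => Finset.sum_le_sum fun k _ => hentry j k
    _ = ∑ i, ∑ j, ∑ k, ∫ ω, (X i ω j * X i ω k) ^ 2 ∂μ := by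
        simp only [Finset.sum_comm (γ := ι)]
    _ ≤ ∑ i, β ^ 2 * ∫ ω, ‖X i ω‖ ^ 2 ∂μ :=
        Finset.sum_le_sum fun i _ => sum_sum_integral_sq_apply_mul_apply_le (hX i) (hbd i)
    _ = β ^ 2 * ∑ i, ∫ ω, ‖X i ω‖ ^ 2 ∂μ := (Finset.mul_sum _ _ _).symm

end IndependentRandomVectors

theorem stmt17_general (n d : ℕ) (hn : 1 ≤ n) (β : ℝ) (hβ : 0 < β)
    (Ω : Type) (mΩ : MeasurableSpace Ω) (μ : Measure Ω)
    (hμ : IsProbabilityMeasure μ)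
    (X : Fin n → Ω → EuclideanSpace ℝ (Fin d))
    (hXm : ∀ i, Measurable (X i))
    (hindep : iIndepFun X μ)
    (hbd : ∀ i, ∀ᵐ ω ∂μ, ‖X i ω‖ ≤ β)
    -- ∑_i E[X_{ij} X_{ik}] = n δ_{jk}
    (hcov : ∀ j k : Fin d,
      (∑ i, ∫ ω, X i ω j * X i ω k ∂μ) = n * (if j = k then 1 else 0)) :
    (∫ ω, Real.sqrt (∑ j : Fin d, ∑ k : Fin d,
        ((n : ℝ)⁻¹ * (∑ i, X i ω j * X i ω k) - (if j = k then 1 else 0)) ^ 2) ∂μ)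
      ≤ β * Real.sqrt (d / n) := by
  have hn₀ : (n : ℝ) ≠ 0 := Nat.cast_ne_zero.2 (by omega)
  have hX (i : Fin n) : AEStronglyMeasurable (X i) μ := (hXm i).aestronglyMeasurable
  have hscale (ω : Ω) : ∑ j, ∑ k,
      ((n : ℝ)⁻¹ * (∑ i, X i ω j * X i ω k) - (if j = k then 1 else 0)) ^ 2
        = (n : ℝ)⁻¹ ^ 2 * centeredScatterHSNormSq μ X ω := by
    simp only [centeredScatterHSNormSq, hcov]
    rw [Finset.mul_sum]
    refine Finset.sum_congr rfl fun j _ => ?_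
    rw [Finset.mul_sum]
    refine Finset.sum_congr rfl fun k _ => ?_
    rw [← mul_pow, mul_sub, ← mul_assoc, inv_mul_cancel₀ hn₀, one_mul]
  have htrace : ∑ i, ∫ ω, ‖X i ω‖ ^ 2 ∂μ = d * n := by
    simp_rw [integral_norm_sq_eq_sum (hX _) (hbd _)]
    rw [Finset.sum_comm]
    simp [hcov]
  have hmean : ∫ ω, (n : ℝ)⁻¹ ^ 2 * centeredScatterHSNormSq μ X ω ∂μ ≤ β ^ 2 * (d / n) := by
    rw [integral_const_mul]
    calc (n : ℝ)⁻¹ ^ 2 * ∫ ω, centeredScatterHSNormSq μ X ω ∂μ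
        ≤ (n : ℝ)⁻¹ ^ 2 * (β ^ 2 * (d * n)) := by
          gcongr
          exact htrace ▸ integral_centeredScatterHSNormSq_le hX
            (fun i i' h => hindep.indepFun h) hbd
      _ = β ^ 2 * (d / n) := by field_simp
  simp_rw [hscale]
  calc ∫ ω, √((n : ℝ)⁻¹ ^ 2 * centeredScatterHSNormSq μ X ω) ∂μ
      ≤ √(∫ ω, (n : ℝ)⁻¹ ^ 2 * centeredScatterHSNormSq μ X ω ∂μ) :=
        integral_sqrt_le_sqrt_integral (ae_of_all _ fun ω => by
          unfold centeredScatterHSNormSq; positivity)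
          ((integrable_centeredScatterHSNormSq hX hbd).const_mul _)
    _ ≤ √(β ^ 2 * (d / n)) := Real.sqrt_le_sqrt hmean
    _ = β * √(d / n) := by rw [Real.sqrt_mul (sq_nonneg β), Real.sqrt_sq hβ.le]

theorem stmt17 (n d : ℕ) (hn : 1 ≤ n) (hd : 1 ≤ d) (β : ℝ) (hβ : 0 < β)
    (Ω : Type) (mΩ : MeasurableSpace Ω) (μ : Measure Ω)
    (hμ : IsProbabilityMeasure μ)
    (X : Fin n → Ω → EuclideanSpace ℝ (Fin d))
    (hXm : ∀ i, Measurable (X i))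
    (hindep : iIndepFun X μ)
    (hbd : ∀ i, ∀ᵐ ω ∂μ, ‖X i ω‖ ≤ β)
    -- ∑_i E[X_{ij} X_{ik}] = n δ_{jk}
    (hcov : ∀ j k : Fin d,
      (∑ i, ∫ ω, X i ω j * X i ω k ∂μ) = n * (if j = k then 1 else 0)) :
    (∫ ω, Real.sqrt (∑ j : Fin d, ∑ k : Fin d,
        ((n : ℝ)⁻¹ * (∑ i, X i ω j * X i ω k) - (if j = k then 1 else 0)) ^ 2) ∂μ)
      ≤ β * Real.sqrt (d / n) :=
  stmt17_general n d hn β hβ Ω mΩ μ hμ X hXm hindep hbd hcov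
end
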